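/- arXiv:1907.05342 — 4 statements merged into one kernel-verified Lean document; each statement's English description precedes it below -/
import Mathlib

section
/- Let x₀ ∈ ℝ, r > 0, p > 0, λ ≥ 1 and A ≥ 0. Let u : ℝ → [0,∞) be integrable with u^p locally integrable, and suppose that for every s ∈ (r/2, r) one has ∫_{x₀−s}^{x₀+s} u^p dx ≤ A · ( ∫_{x₀−s}^{x₀+s} u dx )^{λ}. Let φ : ℝ → [0,1] be symmetric around x₀, nonincreasing in |x−x₀|, with φ = 1 on (x₀−r/2, x₀+r/2) and φ = 0 outside (x₀−r, x₀+r). Then for every S ∈ (r/2, r), ∫_{x₀−S}^{x₀+S} φ u^p dx ≤ A · ( ∫_{x₀−S}^{x₀+S} u dx )^{λ−1} · ∫_ℝ φ u dx. -/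
/-!
Write `E_t = {φ > t}`. Since `φ = ∫₀¹ 1_{E_t} dt` (layer cake), it suffices to show
`∫_{E_t ∩ B_S} u^p ≤ C ∫_{E_t} u` for every level `t ∈ (0, 1)`, where `C = A (∫_{B_S} u)^{λ-1}`.
As `φ` is radially nonincreasing and equals `1` on `B_{r/2}`, the set `E_t ∩ B_S` is, up to a
null set, a ball `B_m` with `r/2 ≤ m ≤ S`, and there the hypothesis gives
`∫_{B_m} u^p ≤ A (∫_{B_m} u)^λ ≤ C ∫_{B_m} u`. The endpoint `m = r/2`, where the hypothesis is
not available, follows by continuity of `m ↦ ∫_{B_m} u`.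
-/

open MeasureTheory Real Set Filter Topology
open scoped ENNReal

section LayerCake

variable {α : Type*} [MeasurableSpace α] {μ ν : Measure α} {φ f g : α → ℝ}

theorem lintegral_ofReal_mul_eq_lintegral_superlevel (hφ : Measurable φ) (hφ0 : 0 ≤ φ)
    {w : α → ℝ≥0∞} (hw : AEMeasurable w μ) :
    ∫⁻ x, ENNReal.ofReal (φ x) * w x ∂μ = ∫⁻ t in Ioi 0, ∫⁻ x in {x | t < φ x}, w x ∂μ := by
  calc ∫⁻ x, ENNReal.ofReal (φ x) * w x ∂μ
      = ∫⁻ x, ENNReal.ofReal (φ x) ∂μ.withDensity w := by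
        rw [lintegral_withDensity_eq_lintegral_mul₀ hw hφ.ennreal_ofReal.aemeasurable]
        simp only [Pi.mul_apply, mul_comm]
    _ = ∫⁻ t in Ioi 0, μ.withDensity w {x | t < φ x} :=
        lintegral_eq_lintegral_meas_lt _ (ae_of_all _ hφ0) hφ.aemeasurable
    _ = ∫⁻ t in Ioi 0, ∫⁻ x in {x | t < φ x}, w x ∂μ :=
        lintegral_congr fun t => withDensity_apply _ (hφ measurableSet_Ioi)

theorem ofReal_integral_mul_eq_lintegral_superlevel (hφ : Measurable φ)
    (hφ01 : ∀ x, φ x ∈ Icc 0 1) (hf : Integrable f μ) (hf0 : 0 ≤ᵐ[μ] f) :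
    ENNReal.ofReal (∫ x, φ x * f x ∂μ)
      = ∫⁻ t in Ioi 0, ENNReal.ofReal (∫ x in {x | t < φ x}, f x ∂μ) := by
  have hφf : Integrable (fun x => φ x * f x) μ :=
    hf.bdd_mul hφ.aestronglyMeasurable (ae_of_all _ fun x => by
      rw [Real.norm_eq_abs, abs_of_nonneg (hφ01 x).1]; exact (hφ01 x).2)
  rw [ofReal_integral_eq_lintegral_ofReal hφf
    (by filter_upwards [hf0] with x hx using mul_nonneg (hφ01 x).1 hx)]
  calc ∫⁻ x, ENNReal.ofReal (φ x * f x) ∂μ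
      = ∫⁻ x, ENNReal.ofReal (φ x) * ENNReal.ofReal (f x) ∂μ :=
        lintegral_congr fun x => ENNReal.ofReal_mul (hφ01 x).1
    _ = ∫⁻ t in Ioi 0, ∫⁻ x in {x | t < φ x}, ENNReal.ofReal (f x) ∂μ :=
        lintegral_ofReal_mul_eq_lintegral_superlevel hφ (fun x => (hφ01 x).1)
          hf.aemeasurable.ennreal_ofReal
    _ = ∫⁻ t in Ioi 0, ENNReal.ofReal (∫ x in {x | t < φ x}, f x ∂μ) :=
        lintegral_congr fun t =>
          (ofReal_integral_eq_lintegral_ofReal hf.integrableOn (ae_restrict_of_ae hf0)).symm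

theorem integral_mul_le_of_forall_superlevel (hφ : Measurable φ) (hφ01 : ∀ x, φ x ∈ Icc 0 1)
    (hf : Integrable f μ) (hf0 : 0 ≤ᵐ[μ] f) (hg : Integrable g ν) (hg0 : 0 ≤ᵐ[ν] g)
    {C : ℝ} (hC : 0 ≤ C)
    (h : ∀ t ∈ Ioo (0 : ℝ) 1,
      ∫ x in {x | t < φ x}, f x ∂μ ≤ C * ∫ x in {x | t < φ x}, g x ∂ν) :
    ∫ x, φ x * f x ∂μ ≤ C * ∫ x, φ x * g x ∂ν := by
  have hφg0 : 0 ≤ ∫ x, φ x * g x ∂ν :=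
    integral_nonneg_of_ae (by filter_upwards [hg0] with x hx using mul_nonneg (hφ01 x).1 hx)
  rw [← ENNReal.ofReal_le_ofReal_iff (mul_nonneg hC hφg0), ENNReal.ofReal_mul hC,
    ofReal_integral_mul_eq_lintegral_superlevel hφ hφ01 hf hf0,
    ofReal_integral_mul_eq_lintegral_superlevel hφ hφ01 hg hg0,
    ← lintegral_const_mul' _ _ ENNReal.ofReal_ne_top]
  refine setLIntegral_mono' measurableSet_Ioi fun t (ht : 0 < t) => ?_
  rcases lt_or_ge t 1 with ht1 | ht1
  · rw [← ENNReal.ofReal_mul hC]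
    exact ENNReal.ofReal_le_ofReal (h t ⟨ht, ht1⟩)
  · have hempty : {x | t < φ x} = ∅ :=
      eq_empty_of_forall_notMem fun x hx => (hφ01 x).2.not_gt (ht1.trans_lt hx)
    simp [hempty]

end LayerCake

theorem exists_ball_subset_subset_closedBall_of_dist_le {X : Type*} [PseudoMetricSpace X]
    {E : Set X} {x₀ : X} (hE : ∀ y z, dist y x₀ ≤ dist z x₀ → z ∈ E → y ∈ E)
    (hbdd : Bornology.IsBounded E) :
    ∃ s, Metric.ball x₀ s ⊆ E ∧ E ⊆ Metric.closedBall x₀ s := by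
  obtain ⟨R, hR⟩ := (Metric.isBounded_iff_subset_closedBall x₀).1 hbdd
  have hD : BddAbove ((dist · x₀) '' E) := ⟨R, by rintro _ ⟨z, hz, rfl⟩; exact hR hz⟩
  refine ⟨sSup ((dist · x₀) '' E), fun y hy => ?_, fun z hz => le_csSup hD ⟨z, hz, rfl⟩⟩
  by_contra hyE
  have : sSup ((dist · x₀) '' E) ≤ dist y x₀ :=
    Real.sSup_le (by rintro _ ⟨z, hz, rfl⟩; by_contra! h; exact hyE (hE y z h.le hz)) dist_nonneg
  exact (Metric.mem_ball.1 hy).not_ge this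

theorem ordConnected_of_dist_le {E : Set ℝ} {x₀ : ℝ}
    (hE : ∀ y z, dist y x₀ ≤ dist z x₀ → z ∈ E → y ∈ E) : E.OrdConnected := by
  refine ⟨fun x hx z hz y hy => ?_⟩
  have hxz : |y - x₀| ≤ max |x - x₀| |z - x₀| :=
    abs_le_max_abs_abs (sub_le_sub_right hy.1 _) (sub_le_sub_right hy.2 _)
  rcases max_choice |x - x₀| |z - x₀| with h | h <;> rw [h] at hxz
  · exact hE y x hxz hx
  · exact hE y z hxz hz

theorem measurable_of_dist_le_imp_le {φ : ℝ → ℝ} {x₀ : ℝ}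
    (hφ : ∀ y z, dist y x₀ ≤ dist z x₀ → φ z ≤ φ y) : Measurable φ :=
  measurable_of_Ioi fun t =>
    (ordConnected_of_dist_le fun y z h (hz : t < φ z) => hz.trans_le (hφ y z h)).measurableSet

theorem le_of_Ioo_subset_Icc {x₀ a b : ℝ} (ha : 0 < a)
    (h : Ioo (x₀ - a) (x₀ + a) ⊆ Icc (x₀ - b) (x₀ + b)) : a ≤ b := by
  have := closure_minimal h isClosed_Icc
  rw [closure_Ioo (by linarith)] at this
  linarith [((Icc_subset_Icc_iff (by linarith)).1 this).1]

theorem exists_mem_Icc_ae_eq_Ioo_of_dist_le {E : Set ℝ} {x₀ a b : ℝ} (ha : 0 < a)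
    (hE : ∀ y z, dist y x₀ ≤ dist z x₀ → z ∈ E → y ∈ E)
    (haE : Ioo (x₀ - a) (x₀ + a) ⊆ E) (hEb : E ⊆ Ioo (x₀ - b) (x₀ + b)) :
    ∃ m ∈ Icc a b, E =ᵐ[volume] Ioo (x₀ - m) (x₀ + m) ∧ Ioo (x₀ - m) (x₀ + m) ⊆ E := by
  obtain ⟨m, hball, hclosed⟩ :=
    exists_ball_subset_subset_closedBall_of_dist_le hE (Metric.isBounded_Ioo _ _ |>.subset hEb)
  rw [Real.ball_eq_Ioo] at hball
  rw [Real.closedBall_eq_Icc] at hclosed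
  have ham : a ≤ m := le_of_Ioo_subset_Icc ha (haE.trans hclosed)
  have hmb : m ≤ b :=
    le_of_Ioo_subset_Icc (ha.trans_le ham) (hball.trans (hEb.trans Ioo_subset_Icc_self))
  exact ⟨m, ⟨ham, hmb⟩,
    (hclosed.eventuallyLE.trans Ioo_ae_eq_Icc.symm.le).antisymm hball.eventuallyLE, hball⟩

theorem rpow_le_rpow_sub_one_mul {a b lam : ℝ} (ha : 0 ≤ a) (hab : a ≤ b) (hlam : 1 ≤ lam) :
    a ^ lam ≤ b ^ (lam - 1) * a := by
  calc a ^ lam = a ^ (lam - 1) * a ^ (1 : ℝ) := by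
        rw [← rpow_add' ha (by linarith), sub_add_cancel]
    _ ≤ b ^ (lam - 1) * a := by
        rw [rpow_one]; gcongr

theorem continuousOn_setIntegral_Ioo_sub_add {u : ℝ → ℝ} (hu : LocallyIntegrable u) (x₀ : ℝ) :
    ContinuousOn (fun m => ∫ x in Ioo (x₀ - m) (x₀ + m), u x) (Ici 0) := by
  have hii : ∀ a b, IntervalIntegrable u volume a b := fun a b =>
    (hu.integrableOn_isCompact isCompact_uIcc).intervalIntegrable
  have hP := intervalIntegral.continuous_primitive hii x₀
  refine ((hP.comp (continuous_const_add x₀)).sub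
    (hP.comp (continuous_sub_left x₀))).continuousOn.congr fun m (hm : 0 ≤ m) => ?_
  simp only [Pi.sub_apply, Function.comp_apply]
  rw [intervalIntegral.integral_interval_sub_left (hii _ _) (hii _ _),
    intervalIntegral.integral_of_le (by linarith), integral_Ioc_eq_integral_Ioo]

theorem setIntegral_rpow_le_of_interpolation {x₀ r p lam A S : ℝ} {u : ℝ → ℝ} (hA : 0 ≤ A)
    (hlam : 1 ≤ lam) (hu_nonneg : ∀ x, 0 ≤ u x) (hu_int : Integrable u)
    (hup_loc : LocallyIntegrable (fun x => u x ^ p))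
    (hyp : ∀ s ∈ Ioo (r / 2) r,
      (∫ x in Ioo (x₀ - s) (x₀ + s), u x ^ p)
        ≤ A * (∫ x in Ioo (x₀ - s) (x₀ + s), u x) ^ lam)
    (hS : S ∈ Ioo (r / 2) r) :
    ∀ m ∈ Icc (r / 2) S, (∫ x in Ioo (x₀ - m) (x₀ + m), u x ^ p)
      ≤ A * (∫ x in Ioo (x₀ - S) (x₀ + S), u x) ^ (lam - 1) *
        ∫ x in Ioo (x₀ - m) (x₀ + m), u x := by
  set F := fun m => ∫ x in Ioo (x₀ - m) (x₀ + m), u x ^ p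
  set G := fun m => ∫ x in Ioo (x₀ - m) (x₀ + m), u x
  set C := A * G S ^ (lam - 1)
  have hF_mono : ∀ {a b}, a ≤ b → F a ≤ F b := fun hab =>
    setIntegral_mono_set ((hup_loc.integrableOn_isCompact isCompact_Icc).mono_set
      Ioo_subset_Icc_self) (ae_of_all _ fun x => rpow_nonneg (hu_nonneg x) p)
      (Ioo_subset_Ioo (by linarith) (by linarith)).eventuallyLE
  have hG_mono : ∀ {a b}, a ≤ b → G a ≤ G b := fun hab =>
    setIntegral_mono_set hu_int.integrableOn (ae_of_all _ hu_nonneg)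
      (Ioo_subset_Ioo (by linarith) (by linarith)).eventuallyLE
  have hinterior : ∀ m ∈ Ioc (r / 2) S, F m ≤ C * G m := fun m hm =>
    calc F m ≤ A * G m ^ lam := hyp m ⟨hm.1, hm.2.trans_lt hS.2⟩
      _ ≤ A * (G S ^ (lam - 1) * G m) := by
          gcongr
          exact rpow_le_rpow_sub_one_mul
            (setIntegral_nonneg measurableSet_Ioo fun x _ => hu_nonneg x) (hG_mono hm.2) hlam
      _ = C * G m := by ring
  rintro m ⟨hm1, hm2⟩
  rcases hm1.eq_or_lt with rfl | hm1
  · have hr : 0 ≤ r / 2 := by linarith [hS.1, hS.2]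
    have hcont : ContinuousWithinAt (fun m => C * G m) (Ioi (r / 2)) (r / 2) :=
      (((continuousOn_setIntegral_Ioo_sub_add hu_int.locallyIntegrable x₀).continuousWithinAt
        hr).mono (Ioi_subset_Ici hr)).const_mul C
    exact ge_of_tendsto hcont <| eventually_of_mem (Ioc_mem_nhdsGT hS.1)
      fun m hm => (hF_mono hm.1.le).trans (hinterior m hm)
  · exact hinterior m ⟨hm1, hm2⟩

theorem layer_cake_averaging_general
    (x₀ r p lam A : ℝ) (hlam : 1 ≤ lam) (hA : 0 ≤ A)
    (u : ℝ → ℝ) (hu_nonneg : ∀ x, 0 ≤ u x) (hu_int : Integrable u)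
    (hup_loc : LocallyIntegrable (fun x => u x ^ p))
    (hyp : ∀ s ∈ Ioo (r / 2) r,
      (∫ x in Ioo (x₀ - s) (x₀ + s), u x ^ p)
        ≤ A * (∫ x in Ioo (x₀ - s) (x₀ + s), u x) ^ lam)
    (φ : ℝ → ℝ) (hφ_range : ∀ x, φ x ∈ Icc (0 : ℝ) 1)
    (hφ_mono : ∀ y z : ℝ, |y - x₀| ≤ |z - x₀| → φ z ≤ φ y)
    (hφ_one : ∀ x ∈ Ioo (x₀ - r / 2) (x₀ + r / 2), φ x = 1) :
    ∀ S ∈ Ioo (r / 2) r,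
      (∫ x in Ioo (x₀ - S) (x₀ + S), φ x * u x ^ p)
        ≤ A * (∫ x in Ioo (x₀ - S) (x₀ + S), u x) ^ (lam - 1) * ∫ x, φ x * u x := by
  intro S hS
  have hφ_meas : Measurable φ := measurable_of_dist_le_imp_le hφ_mono
  have hC : 0 ≤ A * (∫ x in Ioo (x₀ - S) (x₀ + S), u x) ^ (lam - 1) :=
    mul_nonneg hA (rpow_nonneg (setIntegral_nonneg measurableSet_Ioo fun x _ => hu_nonneg x) _)
  refine integral_mul_le_of_forall_superlevel hφ_meas hφ_range
    ((hup_loc.integrableOn_isCompact isCompact_Icc).mono_set Ioo_subset_Icc_self)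
    (ae_of_all _ fun x => rpow_nonneg (hu_nonneg x) p) hu_int (ae_of_all _ hu_nonneg) hC
    fun t ht => ?_
  rw [Measure.restrict_restrict (measurableSet_lt measurable_const hφ_meas)]
  have hE : ∀ y z, dist y x₀ ≤ dist z x₀ →
      z ∈ {x | t < φ x} ∩ Metric.ball x₀ S → y ∈ {x | t < φ x} ∩ Metric.ball x₀ S :=
    fun y z h hz => ⟨hz.1.trans_le (hφ_mono y z h), h.trans_lt hz.2⟩
  rw [Real.ball_eq_Ioo] at hE
  have hball : Ioo (x₀ - r / 2) (x₀ + r / 2) ⊆ {x | t < φ x} ∩ Ioo (x₀ - S) (x₀ + S) :=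
    fun x hx => ⟨show t < φ x by rw [hφ_one x hx]; exact ht.2,
      Ioo_subset_Ioo (by linarith [hS.1]) (by linarith [hS.1]) hx⟩
  obtain ⟨m, hm, hae, hsub⟩ := exists_mem_Icc_ae_eq_Ioo_of_dist_le (a := r / 2)
    (by linarith [hS.1, hS.2]) hE hball inter_subset_right
  calc (∫ x in {x | t < φ x} ∩ Ioo (x₀ - S) (x₀ + S), u x ^ p)
      = ∫ x in Ioo (x₀ - m) (x₀ + m), u x ^ p := setIntegral_congr_set hae
    _ ≤ _ := setIntegral_rpow_le_of_interpolation hA hlam hu_nonneg hu_int hup_loc hyp hS m hm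
    _ ≤ _ := mul_le_mul_of_nonneg_left (setIntegral_mono_set hu_int.integrableOn
        (ae_of_all _ hu_nonneg) (hsub.trans inter_subset_left).eventuallyLE) hC

/-- **Layer-cake (cutoff-level) averaging step**: if for every `s ∈ (r/2, r)` the
unweighted interpolation inequality `∫_{B_s} u^p ≤ A (∫_{B_s} u)^λ` holds, and `φ` is a
radially symmetric, radially nonincreasing cutoff with `φ = 1` on `B_{r/2}(x₀)` and
`φ = 0` outside `B_r(x₀)`, then for every `S ∈ (r/2, r)` one has
`∫_{B_S} φ u^p ≤ A (∫_{B_S} u)^{λ-1} ∫_ℝ φ u`. -/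
theorem layer_cake_averaging
    (x₀ r p lam A : ℝ) (hr : 0 < r) (hp : 0 < p) (hlam : 1 ≤ lam) (hA : 0 ≤ A)
    (u : ℝ → ℝ) (hu_nonneg : ∀ x, 0 ≤ u x) (hu_int : Integrable u)
    (hup_loc : LocallyIntegrable (fun x => u x ^ p))
    (hyp : ∀ s ∈ Ioo (r / 2) r,
      (∫ x in Ioo (x₀ - s) (x₀ + s), u x ^ p)
        ≤ A * (∫ x in Ioo (x₀ - s) (x₀ + s), u x) ^ lam)
    (φ : ℝ → ℝ) (hφ_range : ∀ x, φ x ∈ Icc (0 : ℝ) 1)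
    (hφ_symm : ∀ y : ℝ, φ (x₀ + y) = φ (x₀ - y))
    (hφ_mono : ∀ y z : ℝ, |y - x₀| ≤ |z - x₀| → φ z ≤ φ y)
    (hφ_one : ∀ x ∈ Ioo (x₀ - r / 2) (x₀ + r / 2), φ x = 1)
    (hφ_zero : ∀ x ∉ Ioo (x₀ - r) (x₀ + r), φ x = 0) :
    ∀ S ∈ Ioo (r / 2) r,
      (∫ x in Ioo (x₀ - S) (x₀ + S), φ x * u x ^ p)
        ≤ A * (∫ x in Ioo (x₀ - S) (x₀ + S), u x) ^ (lam - 1) * ∫ x, φ x * u x :=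
  layer_cake_averaging_general x₀ r p lam A hlam hA u hu_nonneg hu_int hup_loc hyp φ hφ_range
    hφ_mono hφ_one
end

section
/- Let d ∈ {1,2,3}, n ∈ (1,2), β ∈ (0,1/9) and C₀ > 0. Then there exist constants α ∈ (0, 2−n), ε ∈ (0,1), δ > 0 and c > 0, depending only on d, n, β, C₀, with the following property. Write D := dα + dn + 4. Let κ, R, T > 0 satisfy κ T^{1/n} ≤ c, write r_k := R·2^{−k}, and let M, S : {1,2,3,…} → [0,∞) be sequences such that M(1) ≤ ε T^{−1/n} r₁^{4/n+d}, S(1) ≤ ε^δ T^{β−(α+1)/n} r₁^{4(α+1)/n+d}, and for every k ≥ 1: S(k+1) ≤ C₀ T^{β−(1+β)dα/D} S(k)^{dα/D} M(k)^{(4α+dn+4)/D} + C₀ r_{k+1}^{−dα} T^{β} M(k)^{α+1} + C₀ r_{k+1}^{−4} T^{4(1+β)/D} S(k)^{(dα+dn)/D} M(k)^{4(α+n+1)/D} + C₀ r_{k+1}^{−4−d(α+n)} T^{β+1} M(k)^{α+n+1}, and M(k+1) ≤ κ r_k^{4/n+d} + C₀ r_{k+1}^{−1} T^{(αd+1−β(dn+3))/D}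 S(k)^{(dn+3)/D} M(k)^{(αd+n+1−3α)/D} + C₀ r_{k+1}^{−1−d(n−3α)/4} T^{(1−3β)/4} S(k)^{3/4} M(k)^{(n+1−3α)/4} + C₀ r_{k+1}^{−4} T^{(αd+4−βdn)/D} S(k)^{dn/D} M(k)^{(αd+4n+4)/D} + C₀ r_{k+1}^{−4−dn} T · M(k)^{n+1}. Then for every k ≥ 1 one has M(k) ≤ ε T^{−1/n} r_k^{4/n+d} and S(k) ≤ ε^δ T^{β−(α+1)/n} r_k^{4(α+1)/n+d}. -/
open Real Filter Topology

/-!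
Take `δ = 1` and `α = (2 - n) / 4`, and write `D = dα + dn + 4`. The two claimed bounds
`M(k) ≤ ε T^{-1/n} r_k^{4/n+d}` and `S(k) ≤ ε T^{β-(α+1)/n} r_k^{4(α+1)/n+d}` are exactly
balanced by the recursion: inserting them into a term `C₀ r_{k+1}^e T^t S(k)^σ M(k)^μ` yields the
bound claimed at level `k + 1`, times a bounded power of `2` (from `r_k = 2 r_{k+1}`) and times
`ε^(σ+μ)`. Every term is superlinear, `σ + μ ≥ 1 + α/D` (for the mass terms this is where
`4α ≤ n` enters), so once `C₀ 2^P ε^(α/D) ≤ 1/5`, with `2^P` bounding those powers of `2`, each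
term is at most a fifth of the target, and so is the source term `κ r_k^{4/n+d}` once
`κ T^{1/n} ≤ c`. Induction on `k` concludes.
-/

noncomputable def rk (R : ℝ) (k : ℕ) : ℝ := R * (2 : ℝ) ^ (-(k : ℝ))

theorem rpow_scaled_bound {ε T x : ℝ} (a b σ : ℝ) (hε : 0 ≤ ε) (hT : 0 < T) (hx : 0 < x) :
    (ε * T ^ a * (2 * x) ^ b) ^ σ = ε ^ σ * 2 ^ (b * σ) * T ^ (a * σ) * x ^ (b * σ) := by
  rw [mul_rpow (by positivity) (by positivity), mul_rpow hε (by positivity),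
    ← rpow_mul hT.le, ← rpow_mul (by positivity), mul_rpow zero_le_two hx.le]
  ring

theorem exists_mul_rpow_le (K : ℝ) {m η : ℝ} (hm : 0 < m) (hη : 0 < η) :
    ∃ ε, 0 < ε ∧ ε < 1 ∧ K * ε ^ m ≤ η := by
  have hlim : Tendsto (fun ε : ℝ => K * ε ^ m) (𝓝[>] 0) (𝓝 0) := by
    have := ((continuousAt_id (x := (0:ℝ))).rpow_const (Or.inr hm.le)).const_mul K
    simpa [zero_rpow hm.ne'] using this.tendsto.mono_left nhdsWithin_le_nhds
  obtain ⟨ε, hsmall, hε⟩ :=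
    ((hlim.eventually (ge_mem_nhds hη)).and (Ioo_mem_nhdsGT one_pos)).exists
  exact ⟨ε, hε.1, hε.2, hsmall⟩

theorem rk_eq_two_mul_rk_succ (R : ℝ) (k : ℕ) : rk R k = 2 * rk R (k + 1) := by
  rw [rk, rk, Nat.cast_succ, neg_add, rpow_add two_pos, rpow_neg_one]
  ring

section Monomial

variable {C T x S M ε η m P aS bS aM bM t e σ μ t' e' : ℝ}

theorem monomial_le_of_scaling (hC : 0 ≤ C) (hT : 0 < T) (hx : 0 < x) (hε : 0 ≤ ε)
    (hS₀ : 0 ≤ S) (hM₀ : 0 ≤ M) (hS : S ≤ ε * T ^ aS * (2 * x) ^ bS)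
    (hM : M ≤ ε * T ^ aM * (2 * x) ^ bM) (hσ : 0 ≤ σ) (hμ : 0 ≤ μ)
    (ht : t + aS * σ + aM * μ = t') (he : e + bS * σ + bM * μ = e') :
    C * x ^ e * T ^ t * S ^ σ * M ^ μ ≤ C * 2 ^ (e' - e) * ε ^ (σ + μ) * (T ^ t' * x ^ e') :=
  calc C * x ^ e * T ^ t * S ^ σ * M ^ μ
      ≤ C * x ^ e * T ^ t * (ε * T ^ aS * (2 * x) ^ bS) ^ σ
          * (ε * T ^ aM * (2 * x) ^ bM) ^ μ := by gcongr
    _ = C * 2 ^ (e' - e) * ε ^ (σ + μ) * (T ^ t' * x ^ e') := by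
        rw [rpow_scaled_bound _ _ _ hε hT hx, rpow_scaled_bound _ _ _ hε hT hx, ← ht, ← he,
          show e + bS * σ + bM * μ - e = bS * σ + bM * μ by ring, rpow_add two_pos,
          rpow_add hT, rpow_add hT, rpow_add hx, rpow_add hx, rpow_add_of_nonneg hε hσ hμ]
        ring

theorem monomial_le_of_superlinear (hC : 0 ≤ C) (hT : 0 < T) (hx : 0 < x) (hε : 0 < ε)
    (hε₁ : ε ≤ 1) (hS₀ : 0 ≤ S) (hM₀ : 0 ≤ M) (hS : S ≤ ε * T ^ aS * (2 * x) ^ bS)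
    (hM : M ≤ ε * T ^ aM * (2 * x) ^ bM) (hsmall : C * 2 ^ P * ε ^ m ≤ η)
    (hσ : 0 ≤ σ) (hμ : 0 ≤ μ) (hgain : 1 + m ≤ σ + μ)
    (ht : t + aS * σ + aM * μ = t') (he : e + bS * σ + bM * μ = e') (hP : e' - e ≤ P) :
    C * x ^ e * T ^ t * S ^ σ * M ^ μ ≤ η * (ε * T ^ t' * x ^ e') :=
  calc C * x ^ e * T ^ t * S ^ σ * M ^ μ
      ≤ C * 2 ^ (e' - e) * ε ^ (σ + μ) * (T ^ t' * x ^ e') :=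
        monomial_le_of_scaling hC hT hx hε.le hS₀ hM₀ hS hM hσ hμ ht he
    _ ≤ C * 2 ^ P * ε ^ (1 + m) * (T ^ t' * x ^ e') := by
        gcongr C * ?_ * ?_ * _
        · exact rpow_le_rpow_of_exponent_le one_le_two hP
        · exact rpow_le_rpow_of_exponent_ge hε hε₁ hgain
    _ = C * 2 ^ P * ε ^ m * (ε * T ^ t' * x ^ e') := by
        rw [add_comm, rpow_add hε, rpow_one]; ring
    _ ≤ η * (ε * T ^ t' * x ^ e') := by gcongr

theorem mass_monomial_le_of_superlinear (hC : 0 ≤ C) (hT : 0 < T) (hx : 0 < x) (hε : 0 < ε)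
    (hε₁ : ε ≤ 1) (hM₀ : 0 ≤ M) (hM : M ≤ ε * T ^ aM * (2 * x) ^ bM)
    (hsmall : C * 2 ^ P * ε ^ m ≤ η) (hμ : 0 ≤ μ) (hgain : 1 + m ≤ μ)
    (ht : t + aM * μ = t') (he : e + bM * μ = e') (hP : e' - e ≤ P) :
    C * x ^ e * T ^ t * M ^ μ ≤ η * (ε * T ^ t' * x ^ e') := by
  simpa using monomial_le_of_superlinear (S := 0) (aS := 0) (bS := 0) (σ := 0)
    hC hT hx hε hε₁ le_rfl hM₀ (by simpa using hε.le) hM hsmall le_rfl hμ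
    (by simpa using hgain) (by simpa using ht) (by simpa using he) hP

theorem radius_free_monomial_le_of_superlinear (hC : 0 ≤ C) (hT : 0 < T) (hx : 0 < x)
    (hε : 0 < ε) (hε₁ : ε ≤ 1) (hS₀ : 0 ≤ S) (hM₀ : 0 ≤ M) (hS : S ≤ ε * T ^ aS * (2 * x) ^ bS)
    (hM : M ≤ ε * T ^ aM * (2 * x) ^ bM) (hsmall : C * 2 ^ P * ε ^ m ≤ η)
    (hσ : 0 ≤ σ) (hμ : 0 ≤ μ) (hgain : 1 + m ≤ σ + μ)
    (ht : t + aS * σ + aM * μ = t') (he : bS * σ + bM * μ = e') (hP : e' ≤ P) :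
    C * T ^ t * S ^ σ * M ^ μ ≤ η * (ε * T ^ t' * x ^ e') := by
  simpa using monomial_le_of_superlinear (e := 0) hC hT hx hε hε₁ hS₀ hM₀ hS hM hsmall
    hσ hμ hgain ht (by simpa using he) (by simpa using hP)

end Monomial

section Step

variable {d n α β C ε D κ T x S M : ℝ}

theorem mass_recursion_le (hd : 0 ≤ d) (hn : 0 < n) (hα : 0 ≤ α) (hαn : 4 * α ≤ n)
    (hD : D = d * α + d * n + 4) (hC : 0 ≤ C) (hε : 0 < ε) (hε₁ : ε ≤ 1)
    (hsmall : C * 2 ^ (4 * (α + 1) / n + d + 4 + d * (α + n)) * ε ^ (α / D) ≤ 1 / 5)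
    (hκ : κ * T ^ (1 / n) * 2 ^ (4 / n + d) ≤ ε / 5) (hT : 0 < T) (hx : 0 < x)
    (hS₀ : 0 ≤ S) (hM₀ : 0 ≤ M)
    (hS : S ≤ ε * T ^ (β - (α + 1) / n) * (2 * x) ^ (4 * (α + 1) / n + d))
    (hM : M ≤ ε * T ^ (-(1 / n)) * (2 * x) ^ (4 / n + d)) :
    κ * (2 * x) ^ (4 / n + d)
      + C * x ^ (-(1 : ℝ)) * T ^ ((α * d + 1 - β * (d * n + 3)) / D)
        * S ^ ((d * n + 3) / D) * M ^ ((α * d + n + 1 - 3 * α) / D)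
      + C * x ^ (-(1 : ℝ) - d * (n - 3 * α) / 4)
        * T ^ ((1 - 3 * β) / 4) * S ^ ((3 : ℝ) / 4) * M ^ ((n + 1 - 3 * α) / 4)
      + C * x ^ (-(4 : ℝ)) * T ^ ((α * d + 4 - β * d * n) / D)
        * S ^ (d * n / D) * M ^ ((α * d + 4 * n + 4) / D)
      + C * x ^ (-(4 : ℝ) - d * n) * T * M ^ (n + 1)
      ≤ ε * T ^ (-(1 / n)) * x ^ (4 / n + d) := by
  subst hD
  have hdα : 0 ≤ d * α := mul_nonneg hd hα
  have hdn : 0 ≤ d * n := mul_nonneg hd hn.le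
  calc _ ≤ 1 / 5 * (ε * T ^ (-(1 / n)) * x ^ (4 / n + d))
        + 1 / 5 * (ε * T ^ (-(1 / n)) * x ^ (4 / n + d))
        + 1 / 5 * (ε * T ^ (-(1 / n)) * x ^ (4 / n + d))
        + 1 / 5 * (ε * T ^ (-(1 / n)) * x ^ (4 / n + d))
        + 1 / 5 * (ε * T ^ (-(1 / n)) * x ^ (4 / n + d)) := by
        gcongr ?_ + ?_ + ?_ + ?_ + ?_
        · calc κ * (2 * x) ^ (4 / n + d)
              = κ * T ^ (1 / n) * 2 ^ (4 / n + d) * (T ^ (-(1 / n)) * x ^ (4 / n + d)) := by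
                rw [mul_rpow zero_le_two hx.le, rpow_neg hT.le]
                field_simp
            _ ≤ ε / 5 * (T ^ (-(1 / n)) * x ^ (4 / n + d)) := by gcongr
            _ = 1 / 5 * (ε * T ^ (-(1 / n)) * x ^ (4 / n + d)) := by ring
        -- What remains for each monomial: its exponents are nonnegative and superlinear, its
        -- `T`- and `r`-exponents balance, and `4(α+1)/n + d + 4 + d(α+n)` bounds its power of 2.
        all_goals first
          | refine monomial_le_of_superlinear hC hT hx hε hε₁ hS₀ hM₀ hS hM hsmall ?_ ?_ ?_ ?_ ?_ ?_
          | (nth_rw 1 [← rpow_one T]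
             refine mass_monomial_le_of_superlinear hC hT hx hε hε₁ hM₀ hM hsmall ?_ ?_ ?_ ?_ ?_)
        all_goals first
          | positivity
          | (field_simp; ring1)
          | (field_simp; nlinarith)
    _ = ε * T ^ (-(1 / n)) * x ^ (4 / n + d) := by ring

theorem entropy_recursion_le (hd : 0 ≤ d) (hn : 0 < n) (hα : 0 ≤ α)
    (hD : D = d * α + d * n + 4) (hC : 0 ≤ C) (hε : 0 < ε) (hε₁ : ε ≤ 1)
    (hsmall : C * 2 ^ (4 * (α + 1) / n + d + 4 + d * (α + n)) * ε ^ (α / D) ≤ 1 / 5)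
    (hT : 0 < T) (hx : 0 < x) (hS₀ : 0 ≤ S) (hM₀ : 0 ≤ M)
    (hS : S ≤ ε * T ^ (β - (α + 1) / n) * (2 * x) ^ (4 * (α + 1) / n + d))
    (hM : M ≤ ε * T ^ (-(1 / n)) * (2 * x) ^ (4 / n + d)) :
    C * T ^ (β - (1 + β) * (d * α) / D) * S ^ (d * α / D) * M ^ ((4 * α + d * n + 4) / D)
      + C * x ^ (-(d * α)) * T ^ β * M ^ (α + 1)
      + C * x ^ (-(4 : ℝ)) * T ^ (4 * (1 + β) / D)
        * S ^ ((d * α + d * n) / D) * M ^ (4 * (α + n + 1) / D)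
      + C * x ^ (-(4 : ℝ) - d * (α + n)) * T ^ (β + 1) * M ^ (α + n + 1)
      ≤ ε * T ^ (β - (α + 1) / n) * x ^ (4 * (α + 1) / n + d) := by
  subst hD
  have hdα : 0 ≤ d * α := mul_nonneg hd hα
  have hdn : 0 ≤ d * n := mul_nonneg hd hn.le
  have hY : 0 ≤ ε * T ^ (β - (α + 1) / n) * x ^ (4 * (α + 1) / n + d) := by positivity
  calc _ ≤ 1 / 5 * (ε * T ^ (β - (α + 1) / n) * x ^ (4 * (α + 1) / n + d))
        + 1 / 5 * (ε * T ^ (β - (α + 1) / n) * x ^ (4 * (α + 1) / n + d))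
        + 1 / 5 * (ε * T ^ (β - (α + 1) / n) * x ^ (4 * (α + 1) / n + d))
        + 1 / 5 * (ε * T ^ (β - (α + 1) / n) * x ^ (4 * (α + 1) / n + d)) := by
        gcongr ?_ + ?_ + ?_ + ?_
        all_goals first
          | refine radius_free_monomial_le_of_superlinear hC hT hx hε hε₁ hS₀ hM₀ hS hM hsmall
              ?_ ?_ ?_ ?_ ?_ ?_
          | refine monomial_le_of_superlinear hC hT hx hε hε₁ hS₀ hM₀ hS hM hsmall ?_ ?_ ?_ ?_ ?_ ?_
          | refine mass_monomial_le_of_superlinear hC hT hx hε hε₁ hM₀ hM hsmall ?_ ?_ ?_ ?_ ?_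
        all_goals first
          | positivity
          | (field_simp; ring1)
          | (field_simp; nlinarith)
    _ ≤ ε * T ^ (β - (α + 1) / n) * x ^ (4 * (α + 1) / n + d) := by linarith

end Step

theorem down_propagation_strong_slippage_general
    (d : ℕ) (n β C₀ : ℝ) (hn1 : 1 < n) (hn2 : n < 2) (hC₀ : 0 < C₀) :
    ∃ α ε δ c : ℝ, 0 < α ∧ α < 2 - n ∧ 0 < ε ∧ ε < 1 ∧ 0 < δ ∧ 0 < c ∧
      ∀ (κ R T : ℝ) (M S : ℕ → ℝ),
        0 < κ → 0 < R → 0 < T → κ * T ^ (1 / n) ≤ c →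
        (∀ k, 0 ≤ M k) → (∀ k, 0 ≤ S k) →
        M 1 ≤ ε * T ^ (-(1 / n)) * rk R 1 ^ (4 / n + (d : ℝ)) →
        S 1 ≤ ε ^ δ * T ^ (β - (α + 1) / n) * rk R 1 ^ (4 * (α + 1) / n + (d : ℝ)) →
        (∀ k : ℕ, 1 ≤ k →
          S (k + 1) ≤
            C₀ * T ^ (β - (1 + β) * ((d : ℝ) * α) / ((d : ℝ) * α + (d : ℝ) * n + 4))
              * S k ^ ((d : ℝ) * α / ((d : ℝ) * α + (d : ℝ) * n + 4))
              * M k ^ ((4 * α + (d : ℝ) * n + 4) / ((d : ℝ) * α + (d : ℝ) * n + 4))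
            + C₀ * rk R (k + 1) ^ (-((d : ℝ) * α)) * T ^ β * M k ^ (α + 1)
            + C₀ * rk R (k + 1) ^ (-(4 : ℝ))
              * T ^ (4 * (1 + β) / ((d : ℝ) * α + (d : ℝ) * n + 4))
              * S k ^ (((d : ℝ) * α + (d : ℝ) * n) / ((d : ℝ) * α + (d : ℝ) * n + 4))
              * M k ^ (4 * (α + n + 1) / ((d : ℝ) * α + (d : ℝ) * n + 4))
            + C₀ * rk R (k + 1) ^ (-(4 : ℝ) - (d : ℝ) * (α + n))
              * T ^ (β + 1) * M k ^ (α + n + 1)) →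
        (∀ k : ℕ, 1 ≤ k →
          M (k + 1) ≤ κ * rk R k ^ (4 / n + (d : ℝ))
            + C₀ * rk R (k + 1) ^ (-(1 : ℝ))
              * T ^ ((α * (d : ℝ) + 1 - β * ((d : ℝ) * n + 3)) / ((d : ℝ) * α + (d : ℝ) * n + 4))
              * S k ^ (((d : ℝ) * n + 3) / ((d : ℝ) * α + (d : ℝ) * n + 4))
              * M k ^ ((α * (d : ℝ) + n + 1 - 3 * α) / ((d : ℝ) * α + (d : ℝ) * n + 4))
            + C₀ * rk R (k + 1) ^ (-(1 : ℝ) - (d : ℝ) * (n - 3 * α) / 4)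
              * T ^ ((1 - 3 * β) / 4) * S k ^ ((3 : ℝ) / 4) * M k ^ ((n + 1 - 3 * α) / 4)
            + C₀ * rk R (k + 1) ^ (-(4 : ℝ))
              * T ^ ((α * (d : ℝ) + 4 - β * (d : ℝ) * n) / ((d : ℝ) * α + (d : ℝ) * n + 4))
              * S k ^ ((d : ℝ) * n / ((d : ℝ) * α + (d : ℝ) * n + 4))
              * M k ^ ((α * (d : ℝ) + 4 * n + 4) / ((d : ℝ) * α + (d : ℝ) * n + 4))
            + C₀ * rk R (k + 1) ^ (-(4 : ℝ) - (d : ℝ) * n) * T * M k ^ (n + 1)) →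
        ∀ k : ℕ, 1 ≤ k →
          M k ≤ ε * T ^ (-(1 / n)) * rk R k ^ (4 / n + (d : ℝ)) ∧
          S k ≤ ε ^ δ * T ^ (β - (α + 1) / n) * rk R k ^ (4 * (α + 1) / n + (d : ℝ)) := by
  set α := (2 - n) / 4 with hα
  set D := (d : ℝ) * α + d * n + 4 with hD
  have hα₀ : 0 < α := by linarith
  have hm : 0 < α / D := by positivity
  obtain ⟨ε, hε₀, hε₁, hsmall⟩ := exists_mul_rpow_le
    (C₀ * 2 ^ (4 * (α + 1) / n + d + 4 + d * (α + n))) hm (by norm_num : (0 : ℝ) < 1 / 5)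
  refine ⟨α, ε, 1, ε / 5 / 2 ^ (4 / n + (d : ℝ)), hα₀, by linarith, hε₀, hε₁, one_pos,
    by positivity, ?_⟩
  intro κ R T M S _ _ hT hκT hM₀ hS₀ hM₁ hS₁ hSrec hMrec k hk
  rw [rpow_one] at hS₁ ⊢
  induction k, hk using Nat.le_induction with
  | base => exact ⟨hM₁, hS₁⟩
  | succ k hk ih =>
    have hx : 0 < rk R (k + 1) := by unfold rk; positivity
    have hMk := hMrec k hk
    rw [rk_eq_two_mul_rk_succ R k] at ih hMk
    refine ⟨hMk.trans ?_, (hSrec k hk).trans ?_⟩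
    · exact mass_recursion_le d.cast_nonneg (by linarith) hα₀.le (by linarith) hD hC₀.le hε₀
        hε₁.le hsmall ((le_div_iff₀ (by positivity)).mp hκT) hT hx (hS₀ k) (hM₀ k) ih.2 ih.1
    · exact entropy_recursion_le d.cast_nonneg (by linarith) hα₀.le hD hC₀.le hε₀ hε₁.le hsmall
        hT hx (hS₀ k) (hM₀ k) ih.2 ih.1

/-- **Two-variable Stampacchia-type induction (strong slippage `n ∈ (1,2)`)**:
down-propagation of the degeneracy of the local mass `M(k)` and of the
time-weighted local `α`-entropy `S(k)` of solutions of the thin-film equation,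
from the recursive localized mass and entropy estimates.  Here `D = dα + dn + 4`. -/
theorem down_propagation_strong_slippage
    (d : ℕ) (hd : d = 1 ∨ d = 2 ∨ d = 3)
    (n β C₀ : ℝ) (hn1 : 1 < n) (hn2 : n < 2)
    (hβ1 : 0 < β) (hβ2 : β < 1 / 9) (hC₀ : 0 < C₀) :
    ∃ α ε δ c : ℝ, 0 < α ∧ α < 2 - n ∧ 0 < ε ∧ ε < 1 ∧ 0 < δ ∧ 0 < c ∧
      ∀ (κ R T : ℝ) (M S : ℕ → ℝ),
        0 < κ → 0 < R → 0 < T → κ * T ^ (1 / n) ≤ c →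
        (∀ k, 0 ≤ M k) → (∀ k, 0 ≤ S k) →
        M 1 ≤ ε * T ^ (-(1 / n)) * rk R 1 ^ (4 / n + (d : ℝ)) →
        S 1 ≤ ε ^ δ * T ^ (β - (α + 1) / n) * rk R 1 ^ (4 * (α + 1) / n + (d : ℝ)) →
        (∀ k : ℕ, 1 ≤ k →
          S (k + 1) ≤
            C₀ * T ^ (β - (1 + β) * ((d : ℝ) * α) / ((d : ℝ) * α + (d : ℝ) * n + 4))
              * S k ^ ((d : ℝ) * α / ((d : ℝ) * α + (d : ℝ) * n + 4))
              * M k ^ ((4 * α + (d : ℝ) * n + 4) / ((d : ℝ) * α + (d : ℝ) * n + 4))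
            + C₀ * rk R (k + 1) ^ (-((d : ℝ) * α)) * T ^ β * M k ^ (α + 1)
            + C₀ * rk R (k + 1) ^ (-(4 : ℝ))
              * T ^ (4 * (1 + β) / ((d : ℝ) * α + (d : ℝ) * n + 4))
              * S k ^ (((d : ℝ) * α + (d : ℝ) * n) / ((d : ℝ) * α + (d : ℝ) * n + 4))
              * M k ^ (4 * (α + n + 1) / ((d : ℝ) * α + (d : ℝ) * n + 4))
            + C₀ * rk R (k + 1) ^ (-(4 : ℝ) - (d : ℝ) * (α + n))
              * T ^ (β + 1) * M k ^ (α + n + 1)) →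
        (∀ k : ℕ, 1 ≤ k →
          M (k + 1) ≤ κ * rk R k ^ (4 / n + (d : ℝ))
            + C₀ * rk R (k + 1) ^ (-(1 : ℝ))
              * T ^ ((α * (d : ℝ) + 1 - β * ((d : ℝ) * n + 3)) / ((d : ℝ) * α + (d : ℝ) * n + 4))
              * S k ^ (((d : ℝ) * n + 3) / ((d : ℝ) * α + (d : ℝ) * n + 4))
              * M k ^ ((α * (d : ℝ) + n + 1 - 3 * α) / ((d : ℝ) * α + (d : ℝ) * n + 4))
            + C₀ * rk R (k + 1) ^ (-(1 : ℝ) - (d : ℝ) * (n - 3 * α) / 4)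
              * T ^ ((1 - 3 * β) / 4) * S k ^ ((3 : ℝ) / 4) * M k ^ ((n + 1 - 3 * α) / 4)
            + C₀ * rk R (k + 1) ^ (-(4 : ℝ))
              * T ^ ((α * (d : ℝ) + 4 - β * (d : ℝ) * n) / ((d : ℝ) * α + (d : ℝ) * n + 4))
              * S k ^ ((d : ℝ) * n / ((d : ℝ) * α + (d : ℝ) * n + 4))
              * M k ^ ((α * (d : ℝ) + 4 * n + 4) / ((d : ℝ) * α + (d : ℝ) * n + 4))
            + C₀ * rk R (k + 1) ^ (-(4 : ℝ) - (d : ℝ) * n) * T * M k ^ (n + 1)) →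
        ∀ k : ℕ, 1 ≤ k →
          M k ≤ ε * T ^ (-(1 / n)) * rk R k ^ (4 / n + (d : ℝ)) ∧
          S k ≤ ε ^ δ * T ^ (β - (α + 1) / n) * rk R k ^ (4 * (α + 1) / n + (d : ℝ)) :=
  down_propagation_strong_slippage_general d n β C₀ hn1 hn2 hC₀
end

section
/- Fix n ∈ (2,3) and define u₀ : ℝ → ℝ by u₀(x) = (2 + sin(1/x))·x^{4/n} for x > 0 and u₀(x) = 0 for x ≤ 0; u₀ is differentiable on (0,∞) with derivative u₀'(x) = (4/n)(2 + sin(1/x))x^{4/n−1} − cos(1/x)·x^{4/n−2}. Then limsup_{r→0⁺} r^{2−8/n} · (1/r) ∫₀^r (u₀'(x))² dx = +∞, where the integral is the Lebesgue integral with values in [0,+∞]; equivalently, for every K > 0 there exists r₀ > 0 such that for all r ∈ (0, r₀), r^{2−8/n} · (1/r) ∫₀^r (u₀')² dx ≥ K. Consequently limsup_{r→0} r^{−4/n+1} ( ⨍_{(0,r)} |u₀'|² dx )^{1/2} = ∞, so u₀ fails the Dal Passo–Giacomelli–Grün sufficient condition for a waiting time. -/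
/-!
Write `a = 4/n`. For `x > 0` the derivative is `x^(a-1) · (a(2 + sin(1/x)) - cos(1/x)/x)`, and
on `[r/2, r]` the factor `x^(a-1)` is within a factor `2^|a-1|` of `r^(a-1)`. The oscillating
term wins: substituting `t = 1/x`, `∫_{r/2}^r cos²(1/x)/x² dx = ∫_{1/r}^{2/r} cos² t dt ≥ 1/(4r)`
for small `r`, while the bounded term contributes only `O(r^(2a-1))`. Hence
`∫_{r/2}^r (u₀')² ≳ r^(2a-3)`, and after multiplying by `r^(2-2a)/r` the quantity is `≳ r⁻² → ∞`.
-/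

open MeasureTheory Real Set Filter Topology

noncomputable def oscProfile (a x : ℝ) : ℝ := (2 + sin (1 / x)) * x ^ a

noncomputable def oscProfileDeriv (a x : ℝ) : ℝ :=
  a * (2 + sin (1 / x)) * x ^ (a - 1) - cos (1 / x) * x ^ (a - 2)

theorem hasDerivAt_oscProfile (a : ℝ) {x : ℝ} (hx : 0 < x) :
    HasDerivAt (oscProfile a) (oscProfileDeriv a x) x := by
  have hinv : HasDerivAt (fun y : ℝ => 1 / y) (-(x ^ 2)⁻¹) x := by
    simpa only [one_div] using hasDerivAt_inv hx.ne'
  have hsin := ((hasDerivAt_sin (1 / x)).comp x hinv).const_add 2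
  have hpow := hasDerivAt_rpow_const (p := a) (Or.inl hx.ne')
  refine (hsin.mul hpow).congr_deriv ?_
  rw [oscProfileDeriv, show a - 2 = a - 1 - 1 by ring, rpow_sub_one hx.ne' (a - 1),
    rpow_sub_one hx.ne' a, Function.comp_apply]
  field_simp
  ring

theorem oscProfileDeriv_eq_rpow_mul {a x : ℝ} (hx : 0 < x) :
    oscProfileDeriv a x = x ^ (a - 1) * (a * (2 + sin (1 / x)) - cos (1 / x) / x) := by
  rw [oscProfileDeriv, show a - 2 = a - 1 - 1 by ring, rpow_sub_one hx.ne' (a - 1)]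
  ring

theorem continuousOn_oscProfileDeriv (a : ℝ) : ContinuousOn (oscProfileDeriv a) (Ioi 0) := by
  unfold oscProfileDeriv
  fun_prop (disch := intro x (hx : 0 < x); positivity)

-- `cos²(1/x)/x² = (1 + cos(2/x))/(2x²)`
theorem hasDerivAt_primitive_cos_inv_sq_div_sq {x : ℝ} (hx : x ≠ 0) :
    HasDerivAt (fun y => -(1 / (2 * y)) - sin (2 / y) / 4) (cos (1 / x) ^ 2 / x ^ 2) x := by
  have hinv := hasDerivAt_inv hx
  have h1 : HasDerivAt (fun y : ℝ => -(1 / (2 * y))) ((x ^ 2)⁻¹ / 2) x := by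
    simp only [one_div, mul_inv]
    exact (hinv.const_mul 2⁻¹).neg.congr_deriv (by ring)
  have h2 : HasDerivAt (fun y : ℝ => sin (2 / y) / 4) (cos (2 / x) * (2 * -(x ^ 2)⁻¹) / 4) x := by
    simp only [div_eq_mul_inv (2 : ℝ)]
    exact ((hasDerivAt_sin _).comp x (hinv.const_mul 2)).div_const 4
  refine (h1.sub h2).congr_deriv ?_
  rw [show 2 / x = 2 * (1 / x) by ring, cos_two_mul]
  field_simp
  ring

theorem continuousOn_cos_inv_sq_div_sq :
    ContinuousOn (fun x => cos (1 / x) ^ 2 / x ^ 2) (Ioi 0) := by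
  fun_prop (disch := intro x (hx : 0 < x); positivity)

theorem integral_cos_inv_sq_div_sq {s t : ℝ} (hs : 0 < s) (ht : 0 < t) :
    ∫ x in s..t, cos (1 / x) ^ 2 / x ^ 2 =
      (1 / s - 1 / t) / 2 + (sin (2 / s) - sin (2 / t)) / 4 := by
  have hpos : ∀ x ∈ uIcc s t, 0 < x := fun x hx =>
    (lt_min hs ht).trans_le (by simpa using hx.1)
  rw [intervalIntegral.integral_eq_sub_of_hasDerivAt
    (fun x hx => hasDerivAt_primitive_cos_inv_sq_div_sq (hpos x hx).ne')]
  · field_simp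
    ring
  · exact (continuousOn_cos_inv_sq_div_sq.mono hpos).intervalIntegrable

theorem inv_four_mul_le_integral_cos_inv_sq_div_sq {r : ℝ} (hr : 0 < r) (hr' : r ≤ 1 / 2) :
    1 / (4 * r) ≤ ∫ x in r / 2..r, cos (1 / x) ^ 2 / x ^ 2 := by
  rw [integral_cos_inv_sq_div_sq (half_pos hr) hr]
  have hsmall : 1 / (4 * r) ≤ 1 / (2 * r) - 1 / 2 := by
    rw [div_sub_div _ _ (by positivity) two_ne_zero,
      div_le_div_iff₀ (by positivity) (by positivity)]
    nlinarith
  have h1 := sin_le_one (2 / r)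
  have h2 := neg_one_le_sin (2 / (r / 2))
  have h3 : 1 / (r / 2) - 1 / r = 1 / r := by field_simp; ring
  have h4 : 1 / (2 * r) = 1 / r / 2 := by ring
  linarith

theorem rpow_le_two_rpow_abs {s : ℝ} (q : ℝ) (h1 : 1 ≤ s) (h2 : s ≤ 2) : s ^ q ≤ 2 ^ |q| :=
  (rpow_le_rpow_of_exponent_le h1 (le_abs_self q)).trans
    (rpow_le_rpow (zero_le_one.trans h1) h2 (abs_nonneg q))

theorem rpow_mem_Icc_of_half_le {r x : ℝ} (p : ℝ) (hr : 0 < r) (hx : r / 2 ≤ x) (hxr : x ≤ r) :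
    x ^ p ∈ Icc ((2 ^ |p|)⁻¹ * r ^ p) (2 ^ |p| * r ^ p) := by
  have hx0 : 0 < x := (half_pos hr).trans_le hx
  have h1 : 1 ≤ r / x := (one_le_div hx0).2 hxr
  have h2 : r / x ≤ 2 := (div_le_iff₀ hx0).2 (by linarith)
  have hxp : x ^ p = r ^ p * ((r / x) ^ p)⁻¹ := by
    rw [div_rpow hr.le hx0.le, inv_div, mul_div_cancel₀ _ (rpow_pos_of_pos hr p).ne']
  have hxp' : x ^ p = r ^ p * (r / x) ^ (-p) := by rw [rpow_neg (by positivity), hxp]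
  constructor
  · rw [hxp, mul_comm]
    gcongr
    exact rpow_le_two_rpow_abs p h1 h2
  · rw [hxp', mul_comm]
    gcongr
    simpa only [abs_neg] using rpow_le_two_rpow_abs (-p) h1 h2

theorem le_oscProfileDeriv_sq {a x m M : ℝ} (hx : 0 < x) (hm : 0 ≤ m)
    (hmx : m ≤ x ^ (a - 1)) (hxM : x ^ (a - 1) ≤ M) :
    m ^ 2 * (cos (1 / x) ^ 2 / x ^ 2) / 2 - 9 * a ^ 2 * M ^ 2 ≤ oscProfileDeriv a x ^ 2 := by
  set X := x ^ (a - 1)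
  have hsin : (a * (2 + sin (1 / x))) ^ 2 ≤ 9 * a ^ 2 := by
    have : (2 + sin (1 / x)) ^ 2 ≤ 9 := by
      nlinarith [neg_one_le_sin (1 / x), sin_le_one (1 / x)]
    rw [mul_pow, mul_comm]
    exact mul_le_mul_of_nonneg_right this (sq_nonneg a)
  have hQ : cos (1 / x) ^ 2 / x ^ 2 / 2 - 9 * a ^ 2 ≤
      (a * (2 + sin (1 / x)) - cos (1 / x) / x) ^ 2 := by
    rw [← div_pow]
    nlinarith [sq_nonneg (a * (2 + sin (1 / x)) - cos (1 / x) / x / 2)]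
  have hm2 : m ^ 2 ≤ X ^ 2 := pow_le_pow_left₀ hm hmx 2
  have hM2 : X ^ 2 ≤ M ^ 2 := pow_le_pow_left₀ (hm.trans hmx) hxM 2
  have hc : 0 ≤ cos (1 / x) ^ 2 / x ^ 2 := by positivity
  rw [oscProfileDeriv_eq_rpow_mul hx, mul_pow]
  nlinarith [mul_le_mul_of_nonneg_left hQ (sq_nonneg X)]

theorem le_integral_oscProfileDeriv_sq (a : ℝ) {r : ℝ} (hr : 0 < r) (hr' : r ≤ 1 / 2) :
    ((2 ^ |a - 1|)⁻¹ * r ^ (a - 1)) ^ 2 / (8 * r)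
        - 9 * a ^ 2 * (2 ^ |a - 1| * r ^ (a - 1)) ^ 2 * (r / 2)
      ≤ ∫ x in r / 2..r, oscProfileDeriv a x ^ 2 := by
  set m := (2 ^ |a - 1|)⁻¹ * r ^ (a - 1)
  set M := 2 ^ |a - 1| * r ^ (a - 1)
  have hle : r / 2 ≤ r := half_le_self hr.le
  have hIcc : uIcc (r / 2) r ⊆ Ioi 0 := by
    rw [uIcc_of_le hle]
    exact fun x hx => (half_pos hr).trans_le hx.1
  have hcos := (continuousOn_cos_inv_sq_div_sq.mono hIcc).intervalIntegrable (μ := volume)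
  have hg := ((continuousOn_oscProfileDeriv a).pow 2 |>.mono hIcc).intervalIntegrable (μ := volume)
  have hpt : ∀ x ∈ Icc (r / 2) r,
      m ^ 2 * (cos (1 / x) ^ 2 / x ^ 2) / 2 - 9 * a ^ 2 * M ^ 2 ≤ oscProfileDeriv a x ^ 2 := by
    intro x hx
    obtain ⟨hmx, hxM⟩ := rpow_mem_Icc_of_half_le (a - 1) hr hx.1 hx.2
    exact le_oscProfileDeriv_sq ((half_pos hr).trans_le hx.1) (by positivity) hmx hxM
  calc m ^ 2 / (8 * r) - 9 * a ^ 2 * M ^ 2 * (r / 2)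
      = m ^ 2 / 2 * (1 / (4 * r)) - 9 * a ^ 2 * M ^ 2 * (r - r / 2) := by ring
    _ ≤ m ^ 2 / 2 * (∫ x in r / 2..r, cos (1 / x) ^ 2 / x ^ 2)
          - 9 * a ^ 2 * M ^ 2 * (r - r / 2) := by
      gcongr
      exact inv_four_mul_le_integral_cos_inv_sq_div_sq hr hr'
    _ = ∫ x in r / 2..r, (m ^ 2 * (cos (1 / x) ^ 2 / x ^ 2) / 2 - 9 * a ^ 2 * M ^ 2) := by
      rw [intervalIntegral.integral_sub ((hcos.const_mul _).div_const _) intervalIntegrable_const,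
        intervalIntegral.integral_div, intervalIntegral.integral_const_mul,
        intervalIntegral.integral_const, smul_eq_mul]
      ring
    _ ≤ ∫ x in r / 2..r, oscProfileDeriv a x ^ 2 :=
      intervalIntegral.integral_mono_on hle
        (((hcos.const_mul _).div_const _).sub intervalIntegrable_const) hg hpt

theorem tendsto_scaled_energy_oscProfileDeriv (a : ℝ) :
    Tendsto (fun r => r ^ (2 - 2 * a) * (1 / r) * ∫ x in r / 2..r, oscProfileDeriv a x ^ 2)
      (𝓝[>] 0) atTop := by
  set c : ℝ := 2 ^ |a - 1|
  have hc : 0 < c := by positivity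
  have hlower : Tendsto (fun r : ℝ => 1 / (8 * c ^ 2) * r⁻¹ ^ 2 - 9 * a ^ 2 * c ^ 2 / 2)
      (𝓝[>] 0) atTop :=
    tendsto_atTop_add_const_right _ _ <|
      ((tendsto_pow_atTop two_ne_zero).comp tendsto_inv_nhdsGT_zero).const_mul_atTop (by positivity)
  refine tendsto_atTop_mono' _ ?_ hlower
  filter_upwards [Ioc_mem_nhdsGT (by norm_num : (0 : ℝ) < 1 / 2)] with r ⟨hr, hr'⟩
  set R := r ^ (a - 1)
  have hR : 0 < R := by positivity
  have hscale : r ^ (2 - 2 * a) = (R ^ 2)⁻¹ := by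
    rw [← rpow_natCast, ← rpow_mul hr.le, ← rpow_neg hr.le]
    congr 1
    push_cast
    ring
  calc 1 / (8 * c ^ 2) * r⁻¹ ^ 2 - 9 * a ^ 2 * c ^ 2 / 2
      = r ^ (2 - 2 * a) * (1 / r) *
          ((c⁻¹ * R) ^ 2 / (8 * r) - 9 * a ^ 2 * (c * R) ^ 2 * (r / 2)) := by
        rw [hscale]
        field_simp
    _ ≤ _ := by
      gcongr
      exact le_integral_oscProfileDeriv_sq a hr hr'

theorem ofReal_intervalIntegral_le_setLIntegral_Ioo {f : ℝ → ℝ} {s t : ℝ} (hf : ∀ x, 0 ≤ f x)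
    (hst : s ≤ t) : ENNReal.ofReal (∫ x in s..t, f x) ≤ ∫⁻ x in Ioo s t, ENNReal.ofReal (f x) := by
  rw [intervalIntegral.integral_of_le hst, setLIntegral_congr Ioo_ae_eq_Ioc]
  calc ENNReal.ofReal (∫ x in Ioc s t, f x)
      ≤ ‖∫ x in Ioc s t, f x‖ₑ := Real.ofReal_le_enorm _
    _ ≤ ∫⁻ x in Ioc s t, ‖f x‖ₑ := enorm_integral_le_lintegral_enorm _
    _ = ∫⁻ x in Ioc s t, ENNReal.ofReal (f x) := by simp only [Real.enorm_of_nonneg (hf _)]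

theorem oscillatory_data_fails_DGG_condition_general
    (n : ℝ)
    (u₀ g : ℝ → ℝ)
    (hu₀ : ∀ x, u₀ x = if 0 < x then (2 + Real.sin (1 / x)) * x ^ (4 / n) else 0)
    (hg : ∀ x, g x = (4 / n) * (2 + Real.sin (1 / x)) * x ^ (4 / n - 1)
        - Real.cos (1 / x) * x ^ (4 / n - 2)) :
    (∀ x : ℝ, 0 < x → HasDerivAt u₀ (g x) x) ∧
    ∀ K : ℝ, 0 < K → ∃ r₀ > 0, ∀ r : ℝ, 0 < r → r < r₀ →
      ENNReal.ofReal K ≤ ENNReal.ofReal (r ^ (2 - 8 / n) * (1 / r)) *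
        ∫⁻ x in Ioo (0 : ℝ) r, ENNReal.ofReal ((g x) ^ 2) := by
  have hg' : g = oscProfileDeriv (4 / n) := funext hg
  refine ⟨fun x hx => ?_, fun K _ => ?_⟩
  · have hu : u₀ =ᶠ[𝓝 x] oscProfile (4 / n) := by
      filter_upwards [eventually_gt_nhds hx] with y hy
      rw [hu₀, if_pos hy, oscProfile]
    rw [hg']
    exact (hasDerivAt_oscProfile _ hx).congr_of_eventuallyEq hu
  obtain ⟨r₀, hr₀, hK⟩ := mem_nhdsGT_iff_exists_Ioo_subset.1
    ((tendsto_scaled_energy_oscProfileDeriv (4 / n)).eventually_ge_atTop K)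
  refine ⟨r₀, hr₀, fun r hr hrr => ?_⟩
  rw [show (2 : ℝ) - 8 / n = 2 - 2 * (4 / n) by ring, hg']
  calc ENNReal.ofReal K
      ≤ ENNReal.ofReal (r ^ (2 - 2 * (4 / n)) * (1 / r) *
          ∫ x in r / 2..r, oscProfileDeriv (4 / n) x ^ 2) :=
        ENNReal.ofReal_le_ofReal (hK ⟨hr, hrr⟩)
    _ = ENNReal.ofReal (r ^ (2 - 2 * (4 / n)) * (1 / r)) *
          ENNReal.ofReal (∫ x in r / 2..r, oscProfileDeriv (4 / n) x ^ 2) :=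
        ENNReal.ofReal_mul (by positivity)
    _ ≤ _ := by
      gcongr
      exact (ofReal_intervalIntegral_le_setLIntegral_Ioo (fun x => sq_nonneg _)
        (half_le_self hr.le)).trans (lintegral_mono_set (Ioo_subset_Ioo_left (half_pos hr).le))

/-- The oscillatory initial data `u₀(x) = (2 + sin(1/x))·x^{4/n}` (for `x > 0`, `u₀ = 0`
for `x ≤ 0`) is differentiable on `(0,∞)` with derivative
`g(x) = (4/n)(2+sin(1/x))x^{4/n-1} − cos(1/x)x^{4/n-2}`, and fails the
Dal Passo–Giacomelli–Grün condition: `limsup_{r→0⁺} r^{2-8/n}·(1/r)·∫₀^r (u₀')² = +∞`,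
i.e. for every `K > 0` there is `r₀ > 0` such that for all `r ∈ (0,r₀)` the quantity
`r^{2-8/n}·(1/r)·∫₀^r (u₀')²` (a `[0,∞]`-valued Lebesgue integral) is at least `K`. -/
theorem oscillatory_data_fails_DGG_condition
    (n : ℝ) (hn : 2 < n ∧ n < 3)
    (u₀ g : ℝ → ℝ)
    (hu₀ : ∀ x, u₀ x = if 0 < x then (2 + Real.sin (1 / x)) * x ^ (4 / n) else 0)
    (hg : ∀ x, g x = (4 / n) * (2 + Real.sin (1 / x)) * x ^ (4 / n - 1)
        - Real.cos (1 / x) * x ^ (4 / n - 2)) :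
    (∀ x : ℝ, 0 < x → HasDerivAt u₀ (g x) x) ∧
    ∀ K : ℝ, 0 < K → ∃ r₀ > 0, ∀ r : ℝ, 0 < r → r < r₀ →
      ENNReal.ofReal K ≤ ENNReal.ofReal (r ^ (2 - 8 / n) * (1 / r)) *
        ∫⁻ x in Ioo (0 : ℝ) r, ENNReal.ofReal ((g x) ^ 2) :=
  oscillatory_data_fails_DGG_condition_general n u₀ g hu₀ hg
end

section
/- Let n > 0 be real and define u : ℝ → ℝ by u(x) = (max(x,0))². Then u is a stationary weak solution of the thin-film equation in the following sense: for every three times continuously differentiable, compactly supported test function ψ : ℝ → ℝ, ∫₀^∞ [ u(x)ⁿ u'(x) ψ'''(x) + (3n/2) u(x)^{n−1} (u'(x))² ψ''(x) + (n(n−1)/2) u(x)^{n−2} (u'(x))³ ψ'(x) ] dx = 0. -/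
/-!
On `(0, ∞)` we have `u = x²` and `u' = 2x`, and the weak-form integrand is exactly the derivative of
`F(x) = 2 x^(2n+1) ψ''(x) + (2n - 2) x^(2n) ψ'(x)`.
Since `n > 0`, `F` is continuous with `F(0) = 0`, and `F` vanishes for large `x` because `ψ` has
compact support; hence the integral is `F(∞) - F(0) = 0`.
-/

open MeasureTheory Real Set Filter Topology

noncomputable def thinFilmWeakIntegrand (n : ℝ) (u ψ : ℝ → ℝ) (x : ℝ) : ℝ :=
  u x ^ n * deriv u x * iteratedDeriv 3 ψ x
    + (3 * n / 2) * u x ^ (n - 1) * (deriv u x) ^ 2 * iteratedDeriv 2 ψ x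
    + (n * (n - 1) / 2) * u x ^ (n - 2) * (deriv u x) ^ 3 * deriv ψ x

noncomputable def parabolaFlux (n : ℝ) (ψ : ℝ → ℝ) (x : ℝ) : ℝ :=
  2 * x ^ (2 * n + 1) * iteratedDeriv 2 ψ x + (2 * n - 2) * x ^ (2 * n) * deriv ψ x

theorem ContDiff.hasDerivAt_iteratedDeriv {m : WithTop ℕ∞} {ψ : ℝ → ℝ} (hψ : ContDiff ℝ m ψ)
    {k : ℕ} (hk : (k : WithTop ℕ∞) < m) (x : ℝ) :
    HasDerivAt (iteratedDeriv k ψ) (iteratedDeriv (k + 1) ψ x) x := by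
  rw [iteratedDeriv_succ]
  exact (hψ.differentiable_iteratedDeriv k hk x).hasDerivAt

theorem deriv_sq_max_zero {x : ℝ} (hx : 0 < x) : deriv (fun y : ℝ => max y 0 ^ 2) x = 2 * x := by
  have hev : (fun y : ℝ => max y 0 ^ 2) =ᶠ[𝓝 x] fun y => y ^ 2 := by
    filter_upwards [Ioi_mem_nhds hx] with y hy
    rw [max_eq_left hy.le]
  rw [hev.deriv_eq]
  simp

theorem parabola_integrand_eq_flux_deriv {n x : ℝ} (hx : 0 < x) (a b c : ℝ) :
    (x ^ 2) ^ n * (2 * x) * c + (3 * n / 2) * (x ^ 2) ^ (n - 1) * (2 * x) ^ 2 * b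
        + (n * (n - 1) / 2) * (x ^ 2) ^ (n - 2) * (2 * x) ^ 3 * a
      = 2 * ((2 * n + 1) * x ^ (2 * n + 1 - 1)) * b + 2 * x ^ (2 * n + 1) * c
        + ((2 * n - 2) * (2 * n * x ^ (2 * n - 1)) * a + (2 * n - 2) * x ^ (2 * n) * b) := by
  -- Every power of `x` becomes `x ^ (2n - 4)` times a natural power, so that `ring` applies.
  have hsplit (e : ℝ) (k : ℕ) (he : e = 2 * n - 4 + k) : x ^ e = x ^ (2 * n - 4) * x ^ k := by
    rw [he, Real.rpow_add_natCast hx.ne']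
  simp only [← Real.rpow_natCast_mul hx.le, Nat.cast_ofNat]
  rw [hsplit (2 * n) 4 (by push_cast; ring), hsplit (2 * (n - 1)) 2 (by push_cast; ring),
    hsplit (2 * (n - 2)) 0 (by push_cast; ring), hsplit (2 * n + 1 - 1) 4 (by push_cast; ring),
    hsplit (2 * n + 1) 5 (by push_cast; ring), hsplit (2 * n - 1) 3 (by push_cast; ring)]
  ring

theorem hasDerivAt_parabolaFlux {n x : ℝ} {ψ : ℝ → ℝ} (hψ : ContDiff ℝ 3 ψ) (hx : 0 < x) :
    HasDerivAt (parabolaFlux n ψ) (thinFilmWeakIntegrand n (fun y => max y 0 ^ 2) ψ x) x := by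
  have hψ₁ : HasDerivAt (deriv ψ) (iteratedDeriv 2 ψ x) x := by
    simpa only [iteratedDeriv_one] using hψ.hasDerivAt_iteratedDeriv (k := 1) (by norm_num) x
  have hψ₂ := hψ.hasDerivAt_iteratedDeriv (k := 2) (by norm_num) x
  have hpow (p : ℝ) : HasDerivAt (fun y : ℝ => y ^ p) (p * x ^ (p - 1)) x :=
    Real.hasDerivAt_rpow_const (Or.inl hx.ne')
  refine (((hpow (2 * n + 1)).const_mul 2).mul hψ₂ |>.add
    (((hpow (2 * n)).const_mul (2 * n - 2)).mul hψ₁)).congr_deriv ?_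
  rw [thinFilmWeakIntegrand, max_eq_left hx.le, deriv_sq_max_zero hx,
    parabola_integrand_eq_flux_deriv hx]

theorem parabolaFlux_zero {n : ℝ} (hn : 0 < n) (ψ : ℝ → ℝ) : parabolaFlux n ψ 0 = 0 := by
  simp [parabolaFlux, Real.zero_rpow (by positivity : 2 * n + 1 ≠ 0),
    Real.zero_rpow (by positivity : 2 * n ≠ 0)]

theorem continuous_parabolaFlux {n : ℝ} (hn : 0 < n) {ψ : ℝ → ℝ} (hψ : ContDiff ℝ 3 ψ) :
    Continuous (parabolaFlux n ψ) := by
  have hψ₁ : Continuous (deriv ψ) := by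
    simpa only [iteratedDeriv_one] using hψ.continuous_iteratedDeriv 1 (by norm_num)
  have hψ₂ := hψ.continuous_iteratedDeriv 2 (by norm_num)
  unfold parabolaFlux
  fun_prop (disch := positivity)

theorem HasCompactSupport.parabolaFlux {ψ : ℝ → ℝ} (hψ : HasCompactSupport ψ) (n : ℝ) :
    HasCompactSupport (parabolaFlux n ψ) := by
  have hψ₂ : HasCompactSupport (iteratedDeriv 2 ψ) := by
    rw [iteratedDeriv_succ, iteratedDeriv_one]
    exact hψ.deriv.deriv
  exact hψ₂.mul_left.add hψ.deriv.mul_left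

/-- The profile `u(x) = (x₊)²` is a stationary weak solution of the one-dimensional
thin-film equation `∂ₜu = −(uⁿ u_{xxx})_x`: for every `ψ ∈ C³_c(ℝ)`,
`∫₀^∞ [ uⁿ u' ψ''' + (3n/2) u^{n-1} (u')² ψ'' + (n(n-1)/2) u^{n-2} (u')³ ψ' ] dx = 0`. -/
theorem parabola_stationary_weak_solution
    (n : ℝ) (hn : 0 < n)
    (u : ℝ → ℝ) (hu : ∀ x, u x = (max x 0) ^ 2) :
    ∀ ψ : ℝ → ℝ, ContDiff ℝ 3 ψ → HasCompactSupport ψ →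
      (∫ x in Ioi (0 : ℝ),
          (u x ^ n * deriv u x * iteratedDeriv 3 ψ x
            + (3 * n / 2) * u x ^ (n - 1) * (deriv u x) ^ 2 * iteratedDeriv 2 ψ x
            + (n * (n - 1) / 2) * u x ^ (n - 2) * (deriv u x) ^ 3 * deriv ψ x)) = 0 := by
  intro ψ hψ hψc
  obtain rfl : u = fun x => max x 0 ^ 2 := funext hu
  change ∫ x in Ioi (0 : ℝ), thinFilmWeakIntegrand n (fun x => max x 0 ^ 2) ψ x = 0
  -- Off integrability the Bochner integral is `0` by convention, so integrability need not be proved.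
  by_cases hint : IntegrableOn (thinFilmWeakIntegrand n (fun x => max x 0 ^ 2) ψ) (Ioi 0)
  · have h := integral_Ioi_of_hasDerivAt_of_tendsto
      (continuous_parabolaFlux hn hψ).continuousWithinAt
      (fun x hx => hasDerivAt_parabolaFlux hψ hx) hint
      ((hψc.parabolaFlux n).is_zero_at_infty.mono_left atTop_le_cocompact)
    rwa [parabolaFlux_zero hn, sub_zero] at h
  · exact integral_undef hint
end
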